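/- arXiv:1308.2364 — 3 statements merged into one kernel-verified Lean document; each statement's English description precedes it below -/
import Mathlib

section
/- Let S be a one-product free sequence over a finite group G. Then |Π(S)| ≥ |S|, where |S| denotes the length of S. -/
/-- The set `Π(S)` of all products of nonempty subsequences of the sequence
(multiset) `S` over `G`, where the terms of a subsequence may be taken in any order. -/
def subseqProds {G : Type*} [Group G] (S : Multiset G) : Set G :=
  {x | ∃ l : List G, l ≠ [] ∧ (l : Multiset G) ≤ S ∧ l.prod = x}

/-- A sequence `S` over `G` is one-product free if `1 ∉ Π(S)`. -/
def OneProdFree {G : Type*} [Group G] (S : Multiset G) : Prop :=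
  (1 : G) ∉ subseqProds S

/-!
Write `S = g₁ ⋯ gₙ` in some order. The prefix products `g₁ ⋯ gₖ` for `1 ≤ k ≤ n` lie in `Π(S)`,
and they are pairwise distinct: if `g₁ ⋯ gᵢ = g₁ ⋯ gⱼ` with `i < j`, then the nonempty
subsequence `gᵢ₊₁ ⋯ gⱼ` has product `1`.
-/

theorem Multiset.finite_setOf_coe_le {α : Type*} (S : Multiset α) :
    {l : List α | (l : Multiset α) ≤ S}.Finite := by
  refine (S.powerset.finite_toSet.biUnion fun T _ => T.lists.finite_toSet).subset ?_
  intro l hl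
  simp only [Set.mem_iUnion, Multiset.mem_lists_iff]
  exact ⟨l, Multiset.mem_powerset.2 hl, rfl⟩

section
variable {G : Type*} [Group G]

theorem subseqProds_finite (S : Multiset G) : (subseqProds S).Finite :=
  (S.finite_setOf_coe_le.image List.prod).subset fun _ ⟨l, _, hl, hx⟩ => ⟨l, hl, hx⟩

theorem List.Sublist.prod_mem_subseqProds {l' l : List G} (h : l'.Sublist l) (hne : l' ≠ []) :
    l'.prod ∈ subseqProds (l : Multiset G) :=
  ⟨l', hne, Multiset.coe_le.2 h.subperm, rfl⟩

theorem prod_take_mem_subseqProds (l : List G) {k : ℕ} (hk : k ∈ Set.Icc 1 l.length) :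
    (l.take k).prod ∈ subseqProds (l : Multiset G) :=
  (l.take_sublist k).prod_mem_subseqProds <| List.ne_nil_of_length_pos <| by
    simp only [List.length_take]; exact lt_min hk.1 (lt_of_lt_of_le hk.1 hk.2)

theorem OneProdFree.prod_take_ne {l : List G} (hS : OneProdFree (l : Multiset G)) {i j : ℕ}
    (hij : i < j) (hj : j ≤ l.length) : (l.take i).prod ≠ (l.take j).prod := by
  obtain ⟨k, rfl⟩ := Nat.exists_eq_add_of_lt hij
  intro h
  rw [add_assoc, List.take_add, List.prod_append, left_eq_mul] at h
  have hne : (l.drop i).take (k + 1) ≠ [] := List.ne_nil_of_length_pos <| by simp; omega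
  exact hS (h ▸ (((l.drop i).take_sublist _).trans (l.drop_sublist i)).prod_mem_subseqProds hne)

theorem OneProdFree.injOn_prod_take {l : List G} (hS : OneProdFree (l : Multiset G)) :
    Set.InjOn (fun k => (l.take k).prod) (Set.Iic l.length) := by
  intro i hi j hj h
  rcases lt_trichotomy i j with hij | rfl | hij
  · exact absurd h (hS.prod_take_ne hij hj)
  · rfl
  · exact absurd h.symm (hS.prod_take_ne hij hi)

end

theorem length_le_card_subseqProds_general {G : Type*} [Group G]
    (S : Multiset G) (hS : OneProdFree S) :
    Multiset.card S ≤ (subseqProds S).ncard := by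
  induction S using Quotient.inductionOn with | h l => ?_
  calc Multiset.card (l : Multiset G) = (Set.Icc 1 l.length).ncard := by simp
    _ ≤ (subseqProds (l : Multiset G)).ncard :=
      Set.ncard_le_ncard_of_injOn _ (fun _ => prod_take_mem_subseqProds l)
        (hS.injOn_prod_take.mono Set.Icc_subset_Iic_self) (subseqProds_finite _)

/-- Let `S` be a one-product free sequence over a finite group `G`.
Then `|Π(S)| ≥ |S|`. -/
theorem length_le_card_subseqProds {G : Type*} [Group G] [Fintype G]
    (S : Multiset G) (hS : OneProdFree S) :
    Multiset.card S ≤ (subseqProds S).ncard :=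
  length_le_card_subseqProds_general S hS
end

section
/- Let N be a subgroup of a finite group G, let p(G) denote the smallest prime divisor of |G|, and let S be a nonempty sequence over G \ N (every term of S lies outside N). Then |{1̄} ∪ Π(S)̄| ≥ min{ p(G), |S| + 1 }, where for X ⊆ G, X̄ denotes the image of X in the left cosets of N. -/
/-! Induct on `S`. Appending a term `a ∉ N` to `S` enlarges `A = {1̄} ∪ Π(S)̄` to a set containing
both `A` and `a • A`. If `a • A ≠ A`, the set grows by at least one. Otherwise `A` is
`⟨a⟩`-invariant, so it contains the `⟨a⟩`-orbit of `1̄`; that orbit has more than one point since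
`a ∉ N`, and its size divides `|G|`, hence is at least `p`. -/

open Pointwise MulAction

lemma le_of_dvd_of_forall_prime_dvd_le {n p d : ℕ} (hmin : ∀ q : ℕ, q.Prime → q ∣ n → p ≤ q)
    (hd : d ∣ n) (h1 : 1 < d) : p ≤ d :=
  (hmin _ (Nat.minFac_prime h1.ne') ((Nat.minFac_dvd d).trans hd)).trans
    (Nat.minFac_le (by omega))

section Action

variable {G α : Type*} [Group G] [MulAction G α]

lemma ncard_add_one_le_of_smul_set_ne {a : G} {A B : Set α} (hB : B.Finite) (hAB : A ⊆ B)
    (haAB : a • A ⊆ B) (hne : a • A ≠ A) : A.ncard + 1 ≤ B.ncard := by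
  have hssub : A ⊂ B := by
    refine hAB.ssubset_of_ne fun hAB_eq => hne ?_
    exact Set.eq_of_subset_of_ncard_le (hAB_eq ▸ haAB) (Set.ncard_smul_set a A).ge
      (hB.subset hAB)
  exact Set.ncard_lt_ncard hssub hB

lemma ncard_orbit_zpowers_dvd_natCard [Finite G] (g : G) (b : α) :
    (orbit (Subgroup.zpowers g) b).ncard ∣ Nat.card G := by
  rw [← Nat.card_coe_set_eq, Nat.card_congr (orbitZPowersEquiv g b), Nat.card_zmod]
  exact ((pow_smul_eq_iff_minimalPeriod_dvd).mp (by rw [pow_orderOf_eq_one, one_smul])).trans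
    (orderOf_dvd_natCard g)

lemma le_ncard_of_smul_set_eq [Finite G] {p : ℕ}
    (hmin : ∀ q : ℕ, q.Prime → q ∣ Nat.card G → p ≤ q) {g : G} {T : Set α} (hT : T.Finite)
    (hgT : g • T = T) {b : α} (hb : b ∈ T) (hgb : g • b ≠ b) : p ≤ T.ncard := by
  have horbit : orbit (Subgroup.zpowers g) b ⊆ T := by
    have hstab : Subgroup.zpowers g ≤ stabilizer G T := Subgroup.zpowers_le.mpr hgT
    rintro _ ⟨⟨h, hh⟩, rfl⟩
    exact (hstab hh : h • T = T) ▸ Set.smul_mem_smul_set hb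
  have hnontriv : 1 < (orbit (Subgroup.zpowers g) b).ncard :=
    (Set.one_lt_ncard (hT.subset horbit)).mpr
      ⟨g • b, ⟨⟨g, Subgroup.mem_zpowers g⟩, rfl⟩, b, mem_orbit_self b, hgb⟩
  calc p ≤ (orbit (Subgroup.zpowers g) b).ncard :=
        le_of_dvd_of_forall_prime_dvd_le hmin (ncard_orbit_zpowers_dvd_natCard g b) hnontriv
    _ ≤ T.ncard := Set.ncard_le_ncard horbit hT

end Action

section SubseqProds

variable {G : Type*} [Group G]

@[simp]
lemma subseqProds_zero : subseqProds (0 : Multiset G) = ∅ :=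
  Set.eq_empty_of_forall_notMem fun _ ⟨_, hl, hle, _⟩ =>
    hl ((Multiset.coe_eq_zero _).mp (Multiset.le_zero.mp hle))

lemma subseqProds_mono {s t : Multiset G} (h : s ≤ t) : subseqProds s ⊆ subseqProds t :=
  fun _ ⟨l, hl, hle, hprod⟩ => ⟨l, hl, hle.trans h, hprod⟩

lemma smul_insert_one_subseqProds_subset (a : G) (s : Multiset G) :
    a • insert 1 (subseqProds s) ⊆ subseqProds (a ::ₘ s) := by
  rintro _ ⟨x, hx | ⟨l, -, hle, rfl⟩, rfl⟩
  · refine ⟨[a], List.cons_ne_nil _ _, ?_, by simp [hx]⟩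
    simp
  · exact ⟨a :: l, List.cons_ne_nil _ _, by simpa using Multiset.cons_le_cons a hle, rfl⟩

variable {N : Subgroup G}

lemma image_mk_smul (a : G) (X : Set G) :
    ((↑) : G → G ⧸ N) '' (a • X) = a • ((↑) : G → G ⧸ N) '' X :=
  Set.image_smul_comm _ a X fun _ => rfl

theorem min_le_ncard_image_mk_insert_one_subseqProds [Finite G] {p : ℕ}
    (hmin : ∀ q : ℕ, q.Prime → q ∣ Nat.card G → p ≤ q) (S : Multiset G)
    (hSN : ∀ g ∈ S, g ∉ N) :
    min p (Multiset.card S + 1) ≤ (((↑) : G → G ⧸ N) '' insert 1 (subseqProds S)).ncard := by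
  induction S using Multiset.induction with
  | empty => simp
  | cons a s ih =>
    set A := ((↑) : G → G ⧸ N) '' insert 1 (subseqProds s)
    set B := ((↑) : G → G ⧸ N) '' insert 1 (subseqProds (a ::ₘ s))
    have hAB : A ⊆ B := Set.image_mono <| Set.insert_subset_insert <|
      subseqProds_mono (Multiset.le_cons_self s a)
    have haAB : a • A ⊆ B := by
      rw [← image_mk_smul]
      exact Set.image_mono ((smul_insert_one_subseqProds_subset a s).trans (Set.subset_insert _ _))
    have ha : a ∉ N := hSN a (Multiset.mem_cons_self a s)
    by_cases haA : a • A = A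
    · have hmoved : a • ((1 : G) : G ⧸ N) ≠ (1 : G) := by
        simpa [MulAction.Quotient.smul_mk, QuotientGroup.eq] using ha
      calc min p (Multiset.card (a ::ₘ s) + 1) ≤ p := min_le_left _ _
        _ ≤ A.ncard := le_ncard_of_smul_set_eq hmin (Set.toFinite A) haA
            (Set.mem_image_of_mem _ (Set.mem_insert 1 _)) hmoved
        _ ≤ B.ncard := Set.ncard_le_ncard hAB
    · have hgrow := ncard_add_one_le_of_smul_set_ne (Set.toFinite B) hAB haAB haA
      have ihs := ih fun g hg => hSN g (Multiset.mem_cons_of_mem hg)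
      rw [Multiset.card_cons]
      omega

end SubseqProds

theorem min_le_card_insert_image_subseqProds_general {G : Type*} [Group G] [Fintype G]
    (N : Subgroup G) (p : ℕ)
    (hmin : ∀ q : ℕ, q.Prime → q ∣ Fintype.card G → p ≤ q)
    (S : Multiset G) (hSN : ∀ g ∈ S, g ∉ N) :
    min p (Multiset.card S + 1) ≤
      ({QuotientGroup.mk 1} ∪ QuotientGroup.mk '' subseqProds S : Set (G ⧸ N)).ncard := by
  rw [← Set.insert_eq, ← Set.image_insert_eq]
  exact min_le_ncard_image_mk_insert_one_subseqProds (by simpa [Nat.card_eq_fintype_card]) S hSN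

/-- Let `N` be a subgroup of a finite group `G`, let `p` be the smallest prime divisor
of `|G|`, and let `S` be a nonempty sequence over `G \ N`. Then
`|{1̄} ∪ Π(S)̄| ≥ min (p, |S| + 1)`, where `X̄` denotes the image of `X ⊆ G` in the
left cosets `G ⧸ N`. -/
theorem min_le_card_insert_image_subseqProds {G : Type*} [Group G] [Fintype G]
    (N : Subgroup G) (p : ℕ) (hp : p.Prime) (hpn : p ∣ Fintype.card G)
    (hmin : ∀ q : ℕ, q.Prime → q ∣ Fintype.card G → p ≤ q)
    (S : Multiset G) (hS : S ≠ 0) (hSN : ∀ g ∈ S, g ∉ N) :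
    min p (Multiset.card S + 1) ≤
      ({QuotientGroup.mk 1} ∪ QuotientGroup.mk '' subseqProds S : Set (G ⧸ N)).ncard :=
  min_le_card_insert_image_subseqProds_general N p hmin S hSN
end

section
/- Let G be a finite group of order n, let p be the smallest prime divisor of n, and suppose G has a cyclic subgroup of order n/p. Then the small Davenport constant satisfies d(G) ≥ n/p + p − 2. -/
/-- The small Davenport constant: the maximal length of a one-product free
sequence over `G`. -/
noncomputable def smallDavenport (G : Type*) [Group G] [Fintype G] : ℕ :=
  sSup {n | ∃ S : Multiset G, OneProdFree S ∧ Multiset.card S = n}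

/-!
Write `n = |G|` and `m = n / p`. The cyclic subgroup `H = ⟨g⟩` of order `m` has index `p`, the
smallest prime factor of `n`, so it is normal and `G ⧸ H` has prime order `p`. For `h ∉ H` the
sequence of `m - 1` copies of `g` and `p - 1` copies of `h` is one-product free: the image in
`G ⧸ H` of a product equal to `1` is `h̄ ^ k`, where `k < p` counts the `h`'s used, so `k = 0`;
the remaining product is `g ^ j` with `0 < j < m`, which is not `1` either.
-/

section

open Multiset

variable {G : Type*} [Group G]

lemma MonoidHom.map_list_prod_eq_pow_count {K : Type*} [Group K] [DecidableEq G]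
    (φ : G →* K) (h : G) {l : List G} (hl : ∀ x ∈ l, x ≠ h → φ x = 1) :
    φ l.prod = φ h ^ l.count h := by
  induction l with
  | nil => simp
  | cons a l ih =>
    have ih := ih fun x hx => hl x (List.mem_cons_of_mem a hx)
    by_cases ha : a = h
    · subst ha
      simp [ih, pow_succ']
    · simp [ih, ha, hl a List.mem_cons_self ha]

lemma OneProdFree.count_lt_orderOf [Finite G] [DecidableEq G] {S : Multiset G}
    (hS : OneProdFree S) (x : G) : S.count x < orderOf x := by
  by_contra! hx
  refine hS ⟨List.replicate (orderOf x) x, ?_, ?_, ?_⟩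
  · simpa using (orderOf_pos x).ne'
  · exact coe_replicate (orderOf x) x ▸ le_count_iff_replicate_le.mp hx
  · simp [pow_orderOf_eq_one]

lemma OneProdFree.card_le_card_sq [Fintype G] {S : Multiset G} (hS : OneProdFree S) :
    card S ≤ Fintype.card G ^ 2 := by
  classical
  calc card S = ∑ x ∈ S.toFinset, S.count x := (toFinset_sum_count_eq S).symm
    _ ≤ ∑ _x ∈ S.toFinset, Fintype.card G :=
      Finset.sum_le_sum fun x _ => (hS.count_lt_orderOf x).le.trans orderOf_le_card_univ
    _ ≤ ∑ _x : G, Fintype.card G := Finset.sum_le_sum_of_subset (Finset.subset_univ _)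
    _ = Fintype.card G ^ 2 := by simp [sq]

lemma card_le_smallDavenport [Fintype G] {S : Multiset G} (hS : OneProdFree S) :
    card S ≤ smallDavenport G :=
  le_csSup ⟨_, by rintro _ ⟨T, hT, rfl⟩; exact hT.card_le_card_sq⟩ ⟨S, hS, rfl⟩

lemma oneProdFree_replicate_add_replicate {K : Type*} [Group K] (φ : G →* K) {g h : G}
    (hg : φ g = 1) (hh : φ h ≠ 1) :
    OneProdFree (replicate (orderOf g - 1) g + replicate (orderOf (φ h) - 1) h) := by
  classical
  rintro ⟨l, hl, hlS, hprod⟩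
  have hgh : g ≠ h := by rintro rfl; exact hh hg
  have hmem : ∀ x ∈ l, x = g ∨ x = h := fun x hx =>
    (mem_add.mp (mem_of_le hlS (mem_coe.mpr hx))).imp eq_of_mem_replicate eq_of_mem_replicate
  have hcount (x : G) : l.count x ≤ _ := coe_count x l ▸ count_le_of_le x hlS
  have hcount_h : l.count h = 0 := by
    have hpow : φ h ^ l.count h = 1 := by
      rw [← φ.map_list_prod_eq_pow_count h fun x hx hxh => (hmem x hx).resolve_right hxh ▸ hg,
        hprod, map_one]
    by_contra hne
    refine pow_ne_one_of_lt_orderOf hne ?_ hpow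
    have := hcount h
    simp only [count_add, count_replicate_self, count_replicate, if_neg hgh] at this
    omega
  have hall : ∀ x ∈ l, x = g := fun x hx =>
    (hmem x hx).resolve_right fun hxh => List.count_eq_zero.mp hcount_h (hxh ▸ hx)
  have hlen : l.length ≤ orderOf g - 1 := by
    have := hcount g
    simp only [count_add, count_replicate_self, count_replicate, if_neg hgh.symm] at this
    rwa [List.count_eq_length.mpr fun x hx => (hall x hx).symm] at this
  have hpos := List.length_pos_iff.mpr hl
  exact pow_ne_one_of_lt_orderOf hpos.ne' (by omega) (List.prod_eq_pow_card l g hall ▸ hprod)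

end

lemma Nat.eq_minFac_of_forall_prime_dvd_le {n p : ℕ} (hp : p.Prime) (hpn : p ∣ n)
    (hmin : ∀ q : ℕ, q.Prime → q ∣ n → p ≤ q) : p = n.minFac := by
  have hn : n ≠ 1 := by rintro rfl; exact hp.one_lt.ne' (Nat.dvd_one.mp hpn)
  exact le_antisymm (hmin _ (Nat.minFac_prime hn) (Nat.minFac_dvd n))
    (Nat.minFac_le_of_dvd hp.two_le hpn)

/-- Let `G` be a finite group of order `n`, let `p` be the smallest prime divisor of
`n`, and suppose `G` has a cyclic subgroup of order `n / p`. Then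
`d(G) ≥ n / p + p - 2`. -/
theorem smallDavenport_ge {G : Type*} [Group G] [Fintype G]
    (p : ℕ) (hp : p.Prime) (hpn : p ∣ Fintype.card G)
    (hmin : ∀ q : ℕ, q.Prime → q ∣ Fintype.card G → p ≤ q)
    (H : Subgroup G) (hHcyc : IsCyclic H) (hH : Nat.card H = Fintype.card G / p) :
    Fintype.card G / p + p - 2 ≤ smallDavenport G := by
  have := Fact.mk hp
  rw [← Nat.card_eq_fintype_card] at hpn hmin hH ⊢
  have hidx : H.index = p := by
    have hcard := H.card_mul_index
    conv_rhs at hcard => rw [← Nat.div_mul_cancel hpn]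
    rw [hH] at hcard
    exact Nat.eq_of_mul_eq_mul_left (Nat.div_pos (Nat.le_of_dvd Nat.card_pos hpn) hp.pos) hcard
  have := Subgroup.normal_of_index_eq_minFac_card
    (hidx.trans (Nat.eq_minFac_of_forall_prime_dvd_le hp hpn hmin))
  obtain ⟨h, hh⟩ : ∃ h : G, h ∉ H := by
    by_contra! hall
    rw [(Subgroup.eq_top_iff' H).mpr hall, Subgroup.index_top] at hidx
    exact hp.one_lt.ne hidx
  obtain ⟨g, hg⟩ := hHcyc.exists_generator
  have hg_order : orderOf (g : G) = Nat.card G / p := by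
    rw [Subgroup.orderOf_coe, orderOf_eq_card_of_forall_mem_zpowers hg, hH]
  have hh_order : orderOf (h : G ⧸ H) = p := by
    refine orderOf_eq_prime ?_ (mt (QuotientGroup.eq_one_iff h).mp hh)
    rw [← hidx, Subgroup.index_eq_card, pow_card_eq_one']
  have hS := card_le_smallDavenport (oneProdFree_replicate_add_replicate (QuotientGroup.mk' H)
    ((QuotientGroup.eq_one_iff (g : G)).mpr g.2) (mt (QuotientGroup.eq_one_iff h).mp hh))
  simp only [QuotientGroup.mk'_apply, hg_order, hh_order, Multiset.card_add,
    Multiset.card_replicate] at hS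
  omega
end
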